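/- arXiv:2505.21796 — 5 statements merged into one kernel-verified Lean document; each statement's English description precedes it below -/
import Mathlib

section
/- Let 0 < a < 1. Then for all real x with 0 ≤ x ≤ (1 − a)/(2 log(1/a)), one has 1/(1 − a^{1−x}) ≤ 1/(1 − a) + 2·a·log(1/a)/(1 − a)² · x. -/
theorem one_div_one_sub_rpow_le (a x : ℝ) (ha0 : 0 < a) (ha1 : a < 1)
    (hx0 : 0 ≤ x) (hx : x ≤ (1 - a) / (2 * Real.log (1 / a))) :
    1 / (1 - a ^ (1 - x)) ≤ 1 / (1 - a) + 2 * a * Real.log (1 / a) / (1 - a) ^ 2 * x := by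
  have hloga : Real.log a < 0 := Real.log_neg ha0 ha1
  set L : ℝ := Real.log (1 / a) with hLdef
  have hL : L = -Real.log a := by rw [hLdef, Real.log_div one_ne_zero ha0.ne', Real.log_one]; ring
  have hL0 : 0 < L := by rw [hL]; linarith
  set t : ℝ := x * L with htdef
  have ht0 : 0 ≤ t := mul_nonneg hx0 hL0.le
  have ht2 : t ≤ (1 - a) / 2 := by
    have := (le_div_iff₀ (by positivity)).mp hx
    rw [htdef]; linarith
  have htlt : t < 1 := by linarith [ha0]
  have hrw : a ^ (1 - x) = a * Real.exp t := by
    rw [Real.rpow_def_of_pos ha0]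
    rw [show Real.log a * (1 - x) = Real.log a + t by rw [htdef, hL]; ring]
    rw [Real.exp_add, Real.exp_log ha0]
  set E : ℝ := Real.exp t with hEdef
  have hE0 : 0 < E := Real.exp_pos t
  have h2 : E * (1 - t) ≤ 1 := by
    have h := Real.add_one_le_exp (-t)
    have : (-t + 1) * E ≤ Real.exp (-t) * E := by
      apply mul_le_mul_of_nonneg_right h hE0.le
    rw [← Real.exp_add] at this
    simp at this
    nlinarith
  have hden : 0 < 1 - a * E := by nlinarith
  have key : (E - 1) * (1 - a) ≤ 2 * t * (1 - a * E) := by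
    have hEt : (E - 1) * (1 - t) ≤ t := by nlinarith
    have hd2 : 1 - a ≤ 2 * (1 - t) * (1 - a * E) := by nlinarith
    nlinarith [mul_nonneg ht0 (sub_nonneg.mpr ha1.le), mul_nonneg ht0 hden.le,
      mul_le_mul_of_nonneg_left hd2 ht0]
  have h1a : (0:ℝ) < 1 - a := by linarith
  rw [hrw, show 2 * a * L / (1 - a) ^ 2 * x = 2 * a * t / (1 - a) ^ 2 by rw [htdef]; ring]
  rw [div_add_div _ _ h1a.ne' (by positivity : ((1:ℝ)-a)^2 ≠ 0)]
  rw [div_le_div_iff₀ hden (by positivity)]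
  nlinarith [mul_le_mul_of_nonneg_left key (mul_nonneg ha0.le h1a.le)]
end

section
/- Let A be a d×d matrix with nonnegative entries whose row sums satisfy ∑_{s'} A_{s,s'} = 1 − c_s with 0 < c_min ≤ c_s ≤ 1 for all s. Let C = A + B be row-stochastic with B nonnegative, and let ν be a stationary distribution of C with all entries positive. Then for every p ≥ 2 and all vectors V₁, V₂ ∈ ℝᵈ: ‖A(V₁ − V₂)‖_{ν,p} ≤ (1 − c_min)^{(p−1)/p} ‖V₁ − V₂‖_{ν,p}, where ‖x‖_{ν,p} = (∑_s ν_s |x_s|^p)^{1/p}. -/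
open Finset

/-- Abstract contraction lemma for `n`-step TD: if the nonnegative matrix `A` has
row sums `1 - c s` with `c s ≥ c_min > 0`, `C = A + B` is row-stochastic with `B`
nonnegative, and `ν` is a positive stationary distribution of `C`, then `A` is a
contraction with factor `(1 - c_min)^{(p-1)/p}` in the weighted `p`-norm `‖·‖_{ν,p}`. -/
theorem matrix_weighted_pnorm_contraction {d : ℕ} (hd : 0 < d)
    (A B C : Matrix (Fin d) (Fin d) ℝ)
    (c : Fin d → ℝ) (cmin : ℝ) (hcmin : 0 < cmin)
    (hc : ∀ s, cmin ≤ c s) (hc1 : ∀ s, c s ≤ 1)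
    (hA_nonneg : ∀ s s', 0 ≤ A s s')
    (hA_rowsum : ∀ s, ∑ s', A s s' = 1 - c s)
    (hB_nonneg : ∀ s s', 0 ≤ B s s')
    (hC : C = A + B)
    (hC_rowsum : ∀ s, ∑ s', C s s' = 1)
    (ν : Fin d → ℝ) (hν_pos : ∀ s, 0 < ν s) (hν_sum : ∑ s, ν s = 1)
    (hν_stat : ∀ s, ν s = ∑ s', ν s' * C s' s)
    (p : ℝ) (hp : 2 ≤ p) :
    ∀ V₁ V₂ : Fin d → ℝ,
      (∑ s, ν s * |A.mulVec (V₁ - V₂) s| ^ p) ^ (1 / p) ≤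
        (1 - cmin) ^ ((p - 1) / p) * (∑ s, ν s * |(V₁ - V₂) s| ^ p) ^ (1 / p) := by
  intro V₁ V₂
  set W : Fin d → ℝ := V₁ - V₂ with hW
  have hp0 : 0 < p := by linarith
  have hp1 : (1:ℝ) ≤ p := by linarith
  have hcmin1 : cmin ≤ 1 := le_trans (hc ⟨0, hd⟩) (hc1 ⟨0, hd⟩)
  have h1c : 0 ≤ 1 - cmin := by linarith
  -- pointwise bound : |A W s|^p ≤ (1-cmin)^(p-1) * ∑ s', A s s' * |W s'|^p
  have key : ∀ s, |A.mulVec W s| ^ p ≤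
      (1 - cmin) ^ (p - 1) * ∑ s', A s s' * |W s'| ^ p := by
    intro s
    have habs : |A.mulVec W s| ≤ ∑ s', A s s' * |W s'| := by
      rw [Matrix.mulVec, dotProduct]
      refine le_trans (Finset.abs_sum_le_sum_abs _ _) ?_
      refine Finset.sum_le_sum fun s' _ => ?_
      rw [abs_mul, abs_of_nonneg (hA_nonneg s s')]
    have hsum_nonneg : ∀ s' ∈ Finset.univ, 0 ≤ A s s' * |W s'| ^ p := fun s' _ =>
      mul_nonneg (hA_nonneg s s') (Real.rpow_nonneg (abs_nonneg _) _)
    have hhold := Real.inner_le_weight_mul_Lp_of_nonneg Finset.univ hp1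
      (fun s' => A s s') (fun s' => |W s'|) (hA_nonneg s) (fun s' => abs_nonneg _)
    have hrow_le : ∑ s', A s s' ≤ 1 - cmin := by
      rw [hA_rowsum s]; linarith [hc s]
    have hrow_nonneg : 0 ≤ ∑ s', A s s' := Finset.sum_nonneg fun s' _ => hA_nonneg s s'
    have h2 : |A.mulVec W s| ≤
        (1 - cmin) ^ (1 - p⁻¹) * (∑ s', A s s' * |W s'| ^ p) ^ p⁻¹ := by
      refine le_trans habs (le_trans hhold ?_)
      exact mul_le_mul_of_nonneg_right
        (Real.rpow_le_rpow hrow_nonneg hrow_le (by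
          have h1 := mul_inv_cancel₀ (ne_of_gt hp0)
          have h2 : 0 ≤ p⁻¹ := inv_nonneg.mpr hp0.le
          nlinarith))
        (Real.rpow_nonneg (Finset.sum_nonneg hsum_nonneg) _)
    calc |A.mulVec W s| ^ p
        ≤ ((1 - cmin) ^ (1 - p⁻¹) * (∑ s', A s s' * |W s'| ^ p) ^ p⁻¹) ^ p :=
          Real.rpow_le_rpow (abs_nonneg _) h2 (le_of_lt hp0)
      _ = (1 - cmin) ^ (p - 1) * ∑ s', A s s' * |W s'| ^ p := by
          rw [Real.mul_rpow (Real.rpow_nonneg h1c _)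
            (Real.rpow_nonneg (Finset.sum_nonneg hsum_nonneg) _),
            ← Real.rpow_mul h1c,
            ← Real.rpow_mul (Finset.sum_nonneg hsum_nonneg),
            inv_mul_cancel₀ (ne_of_gt hp0), Real.rpow_one]
          congr 2
          field_simp
  -- sum bound
  have hsum : ∑ s, ν s * |A.mulVec W s| ^ p ≤
      (1 - cmin) ^ (p - 1) * ∑ s, ν s * |W s| ^ p := by
    calc ∑ s, ν s * |A.mulVec W s| ^ p
        ≤ ∑ s, ν s * ((1 - cmin) ^ (p - 1) * ∑ s', A s s' * |W s'| ^ p) := by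
          refine Finset.sum_le_sum fun s _ => ?_
          exact mul_le_mul_of_nonneg_left (key s) (le_of_lt (hν_pos s))
      _ = (1 - cmin) ^ (p - 1) * ∑ s', (∑ s, ν s * A s s') * |W s'| ^ p := by
          rw [Finset.mul_sum]
          simp_rw [Finset.mul_sum, Finset.sum_mul]
          rw [Finset.sum_comm]
          refine Finset.sum_congr rfl fun s' _ => ?_
          rw [Finset.mul_sum]
          exact Finset.sum_congr rfl fun s _ => by ring
      _ ≤ (1 - cmin) ^ (p - 1) * ∑ s', ν s' * |W s'| ^ p := by
          refine mul_le_mul_of_nonneg_left ?_ (Real.rpow_nonneg h1c _)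
          refine Finset.sum_le_sum fun s' _ => ?_
          refine mul_le_mul_of_nonneg_right ?_ (Real.rpow_nonneg (abs_nonneg _) _)
          rw [hν_stat s']
          refine Finset.sum_le_sum fun s _ => ?_
          rw [hC]
          simp only [Matrix.add_apply]
          have := mul_nonneg (le_of_lt (hν_pos s)) (hB_nonneg s s')
          nlinarith [hν_pos s]
  -- take 1/p powers
  have hLHS_nonneg : 0 ≤ ∑ s, ν s * |A.mulVec W s| ^ p :=
    Finset.sum_nonneg fun s _ => mul_nonneg (le_of_lt (hν_pos s))
      (Real.rpow_nonneg (abs_nonneg _) _)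
  have hRHS_nonneg : 0 ≤ ∑ s, ν s * |W s| ^ p :=
    Finset.sum_nonneg fun s _ => mul_nonneg (le_of_lt (hν_pos s))
      (Real.rpow_nonneg (abs_nonneg _) _)
  calc (∑ s, ν s * |A.mulVec W s| ^ p) ^ (1 / p)
      ≤ ((1 - cmin) ^ (p - 1) * ∑ s, ν s * |W s| ^ p) ^ (1 / p) :=
        Real.rpow_le_rpow hLHS_nonneg hsum (by positivity)
    _ = (1 - cmin) ^ ((p - 1) / p) * (∑ s, ν s * |W s| ^ p) ^ (1 / p) := by
        rw [Real.mul_rpow (Real.rpow_nonneg h1c _) hRHS_nonneg,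
          ← Real.rpow_mul h1c]
        congr 2
        field_simp
end

section
/- Consider the Q-learning expected operator F̄(Q)_{s,a} = ρ(s,a)·(H Q)_{s,a} + (1 − ρ(s,a))·Q_{s,a}, where H is a γ-contraction in the sup norm (0 ≤ γ < 1) and ρ(s,a) ∈ [ρ_min, 1] with ρ_min > 0 for all (s,a). Then F̄ is a contraction in the sup norm with factor 1 − (1 − γ)ρ_min: ‖F̄(Q₁) − F̄(Q₂)‖_∞ ≤ (1 − (1 − γ)ρ_min)‖Q₁ − Q₂‖_∞ for all Q₁, Q₂ ∈ ℝ^{S×A}. -/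
/-- The expected `Q`-learning operator
`F̄(Q)(s,a) = ρ(s,a)·(HQ)(s,a) + (1-ρ(s,a))·Q(s,a)` is a sup-norm contraction
with factor `1 - (1-γ)·ρ_min` whenever `H` is a sup-norm `γ`-contraction. -/
theorem qlearning_expected_operator_contraction
    {S A : Type*} [Fintype S] [Fintype A] [Nonempty S] [Nonempty A]
    (H : (S × A → ℝ) → (S × A → ℝ)) (γ : ℝ) (hγ0 : 0 ≤ γ) (hγ1 : γ < 1)
    (hH : ∀ Q₁ Q₂ : S × A → ℝ, ‖H Q₁ - H Q₂‖ ≤ γ * ‖Q₁ - Q₂‖)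
    (ρ : S × A → ℝ) (ρmin : ℝ) (hρmin : 0 < ρmin)
    (hρ : ∀ sa, ρmin ≤ ρ sa) (hρ1 : ∀ sa, ρ sa ≤ 1)
    (Fbar : (S × A → ℝ) → (S × A → ℝ))
    (hFbar : ∀ Q sa, Fbar Q sa = ρ sa * H Q sa + (1 - ρ sa) * Q sa) :
    ∀ Q₁ Q₂ : S × A → ℝ,
      ‖Fbar Q₁ - Fbar Q₂‖ ≤ (1 - (1 - γ) * ρmin) * ‖Q₁ - Q₂‖ := by
  intro Q₁ Q₂
  have hQ : (0:ℝ) ≤ ‖Q₁ - Q₂‖ := norm_nonneg _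
  have hfac : (0:ℝ) ≤ 1 - (1 - γ) * ρmin := by
    have h1 : (1 - γ) * ρmin ≤ 1 * 1 := by
      apply mul_le_mul (by linarith) (le_trans (hρ (Classical.arbitrary _)) (hρ1 _)) hρmin.le
      linarith
    linarith
  rw [pi_norm_le_iff_of_nonneg (by positivity)]
  intro sa
  have hH' : |H Q₁ sa - H Q₂ sa| ≤ γ * ‖Q₁ - Q₂‖ := by
    calc |H Q₁ sa - H Q₂ sa| = ‖(H Q₁ - H Q₂) sa‖ := by simp [Pi.sub_apply]
    _ ≤ ‖H Q₁ - H Q₂‖ := norm_le_pi_norm _ sa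
    _ ≤ γ * ‖Q₁ - Q₂‖ := hH Q₁ Q₂
  have hq' : |Q₁ sa - Q₂ sa| ≤ ‖Q₁ - Q₂‖ := by
    calc |Q₁ sa - Q₂ sa| = ‖(Q₁ - Q₂) sa‖ := by simp [Pi.sub_apply]
    _ ≤ ‖Q₁ - Q₂‖ := norm_le_pi_norm _ sa
  have hρ0 : (0:ℝ) ≤ ρ sa := le_trans hρmin.le (hρ sa)
  have hρ1' : ρ sa ≤ 1 := hρ1 sa
  have key : |(Fbar Q₁ - Fbar Q₂) sa| ≤ (1 - (1 - γ) * ρ sa) * ‖Q₁ - Q₂‖ := by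
    have : (Fbar Q₁ - Fbar Q₂) sa
        = ρ sa * (H Q₁ sa - H Q₂ sa) + (1 - ρ sa) * (Q₁ sa - Q₂ sa) := by
      simp [Pi.sub_apply, hFbar]; ring
    rw [this]
    calc |ρ sa * (H Q₁ sa - H Q₂ sa) + (1 - ρ sa) * (Q₁ sa - Q₂ sa)|
        ≤ |ρ sa * (H Q₁ sa - H Q₂ sa)| + |(1 - ρ sa) * (Q₁ sa - Q₂ sa)| := abs_add_le _ _
      _ = ρ sa * |H Q₁ sa - H Q₂ sa| + (1 - ρ sa) * |Q₁ sa - Q₂ sa| := by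
          rw [abs_mul, abs_mul, abs_of_nonneg hρ0, abs_of_nonneg (sub_nonneg.mpr hρ1')]
      _ ≤ ρ sa * (γ * ‖Q₁ - Q₂‖) + (1 - ρ sa) * ‖Q₁ - Q₂‖ := by
          gcongr
      _ = (1 - (1 - γ) * ρ sa) * ‖Q₁ - Q₂‖ := by ring
  calc |(Fbar Q₁ - Fbar Q₂) sa| ≤ (1 - (1 - γ) * ρ sa) * ‖Q₁ - Q₂‖ := key
    _ ≤ (1 - (1 - γ) * ρmin) * ‖Q₁ - Q₂‖ := by
        apply mul_le_mul_of_nonneg_right _ hQ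
        have := hρ sa
        nlinarith
end

section
/- Let w₁, w₂, … be i.i.d. standard normal random variables and define x_k = x₀ ∏_{i=0}^{k−1}(1 − αᵢ + αᵢ w_{i+1}) with x₀ > 0 and deterministic step sizes αᵢ ∈ (0, 1/2]. Let y_k = (1/(k+1))∑_{j=0}^{k} x_j. Then for every k > 2 and every t > (k+1)/(x₀α₀α₁), E[exp(t y_k)] = +∞. In particular, y_k is not subgaussian (nor subexponential) for any finite k > 2. -/
open MeasureTheory ProbabilityTheory Finset Real Filter
open scoped ENNReal NNReal

/-!
On the event that w₁, …, w_k are all nonnegative, every factor 1 - αᵢ + αᵢ wᵢ₊₁ is nonnegative,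
so (k + 1) y_k ≥ x₂ ≥ x₀ α₀ α₁ w₁ w₂ and t y_k ≥ c w₁ w₂ with c = t x₀ α₀ α₁ / (k + 1) > 1.
The event {w₃, …, w_k ≥ 0} has positive probability and is independent of (w₁, w₂), and
E[exp (c w₁ w₂); w₁, w₂ ≥ 0] = ∞: on the square [s, s + 1]² the integrand is at least exp (c s²)
while the Gaussian mass is at least φ(s + 1)² = exp (-(s + 1)²) / 2π.
-/

lemma ENNReal.eq_top_of_tendsto_atTop_of_ofReal_le {α : Type*} {l : Filter α} [l.NeBot]
    {g : α → ℝ} (hg : Tendsto g l atTop) {I : ℝ≥0∞} (hI : ∀ᶠ s in l, ENNReal.ofReal (g s) ≤ I) :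
    I = ⊤ :=
  top_le_iff.1 (le_of_tendsto (ENNReal.tendsto_ofReal_atTop.comp hg) hI)

namespace ProbabilityTheory

lemma gaussianPDFReal_antitoneOn (m : ℝ) (v : ℝ≥0) :
    AntitoneOn (gaussianPDFReal m v) (Set.Ici m) := by
  intro x hx y hy hxy
  have : (x - m) ^ 2 ≤ (y - m) ^ 2 := pow_le_pow_left₀ (sub_nonneg.2 hx) (by linarith) 2
  simp only [gaussianPDFReal_def]
  gcongr

lemma ofReal_mul_gaussianPDFReal_le_gaussianReal_Icc {m u b : ℝ} {v : ℝ≥0} (hv : v ≠ 0)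
    (hmu : m ≤ u) (hub : u ≤ b) :
    ENNReal.ofReal ((b - u) * gaussianPDFReal m v b) ≤ gaussianReal m v (Set.Icc u b) := by
  rw [gaussianReal_apply m hv, ENNReal.ofReal_mul (sub_nonneg.2 hub), ← Real.volume_Icc, mul_comm,
    ← setLIntegral_const]
  refine setLIntegral_mono (measurable_gaussianPDF m v) fun x hx => ?_
  exact ENNReal.ofReal_le_ofReal <|
    gaussianPDFReal_antitoneOn m v (hmu.trans hx.1) (hmu.trans (hx.1.trans hx.2)) hx.2

lemma gaussianReal_ne_zero_of_volume_ne_zero (m : ℝ) {v : ℝ≥0} (hv : v ≠ 0) {s : Set ℝ}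
    (hs : volume s ≠ 0) : gaussianReal m v s ≠ 0 :=
  fun h => hs (gaussianReal_absolutelyContinuous' m hv h)

lemma tendsto_exp_mul_sq_mul_gaussianPDFReal_sq_atTop {v : ℝ≥0} {c : ℝ} (hc : 1 < c * v) :
    Tendsto (fun s => exp (c * s ^ 2) * gaussianPDFReal 0 v (s + 1) ^ 2) atTop atTop := by
  have hv : (0 : ℝ) < v := by
    contrapose! hc
    simp [le_antisymm hc v.2]
  have hpoly : Tendsto (fun s : ℝ => ((c - 1 / v) * s - 2 / v) * s - 1 / v) atTop atTop := by
    refine tendsto_atTop_add_const_right _ _ (Tendsto.atTop_mul_atTop₀ ?_ tendsto_id)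
    refine tendsto_atTop_add_const_right _ _ (Tendsto.const_mul_atTop ?_ tendsto_id)
    rw [sub_pos, div_lt_iff₀ hv]
    linarith
  refine ((tendsto_exp_atTop.comp hpoly).atTop_div_const (by positivity : 0 < 2 * π * v)).congr
    fun s => ?_
  simp only [Function.comp, gaussianPDFReal_def, sub_zero, mul_pow, inv_pow,
    Real.sq_sqrt (by positivity : (0 : ℝ) ≤ 2 * π * v), ← Real.exp_nat_mul]
  rw [div_eq_mul_inv, mul_left_comm, ← Real.exp_add, mul_comm]
  congr 2
  field_simp
  push_cast
  ring

lemma lintegral_exp_mul_mul_prod_gaussianReal_eq_top {v : ℝ≥0} {c : ℝ} (hc : 1 < c * v) :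
    ∫⁻ p in Set.Ici 0 ×ˢ Set.Ici 0, ENNReal.ofReal (exp (c * (p.1 * p.2)))
      ∂(gaussianReal 0 v).prod (gaussianReal 0 v) = ⊤ := by
  have hv : v ≠ 0 := by
    rintro rfl
    simp at hc
    linarith
  have hc0 : 0 ≤ c := by
    by_contra! h
    nlinarith [v.2]
  refine ENNReal.eq_top_of_tendsto_atTop_of_ofReal_le
    (tendsto_exp_mul_sq_mul_gaussianPDFReal_sq_atTop hc) ?_
  filter_upwards [eventually_ge_atTop 0] with s hs
  set γ := gaussianReal 0 v
  set S := Set.Icc s (s + 1) ×ˢ Set.Icc s (s + 1)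
  have hpdf : ENNReal.ofReal (gaussianPDFReal 0 v (s + 1)) ≤ γ (Set.Icc s (s + 1)) := by
    simpa using ofReal_mul_gaussianPDFReal_le_gaussianReal_Icc (b := s + 1) hv hs (by linarith)
  calc ENNReal.ofReal (exp (c * s ^ 2) * gaussianPDFReal 0 v (s + 1) ^ 2)
      = ENNReal.ofReal (exp (c * s ^ 2)) * ENNReal.ofReal (gaussianPDFReal 0 v (s + 1)) ^ 2 := by
        rw [ENNReal.ofReal_mul (exp_pos _).le, ENNReal.ofReal_pow (gaussianPDFReal_nonneg _ _ _)]
    _ ≤ ENNReal.ofReal (exp (c * s ^ 2)) * γ.prod γ S := by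
        rw [Measure.prod_prod, ← sq]
        gcongr
    _ = ∫⁻ _ in S, ENNReal.ofReal (exp (c * s ^ 2)) ∂γ.prod γ := (setLIntegral_const _ _).symm
    _ ≤ ∫⁻ p in S, ENNReal.ofReal (exp (c * (p.1 * p.2))) ∂γ.prod γ := by
        refine setLIntegral_mono (by fun_prop) fun p hp => ?_
        have : s ^ 2 ≤ p.1 * p.2 := by
          rw [sq]
          exact mul_le_mul hp.1.1 hp.2.1 hs (hs.trans hp.1.1)
        gcongr
    _ ≤ _ := lintegral_mono_set <|
        Set.prod_mono (fun q hq => hs.trans hq.1) fun q hq => hs.trans hq.1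

variable {Ω ι α β : Type*} {mΩ : MeasurableSpace Ω} [MeasurableSpace α] [MeasurableSpace β]
  {μ : Measure Ω}

lemma IndepFun.lintegral_comp_prodMk [IsFiniteMeasure μ] {X : Ω → α} {Y : Ω → β}
    (hXY : IndepFun X Y μ) (hX : Measurable X) (hY : Measurable Y) {f : α × β → ℝ≥0∞}
    (hf : Measurable f) :
    ∫⁻ ω, f (X ω, Y ω) ∂μ = ∫⁻ p, f p ∂(μ.map X).prod (μ.map Y) := by
  rw [← hXY.map_prod_eq_prod_map_map hX.aemeasurable hY.aemeasurable, lintegral_map hf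
    (hX.prodMk hY)]

lemma IndepFun.lintegral_comp_mul_indicator_preimage {X : Ω → α} {Y : Ω → β}
    (hXY : IndepFun X Y μ) (hX : Measurable X) (hY : Measurable Y) {f : α → ℝ≥0∞}
    (hf : Measurable f) {s : Set β} (hs : MeasurableSet s) :
    ∫⁻ ω, f (X ω) * (Y ⁻¹' s).indicator 1 ω ∂μ = (∫⁻ ω, f (X ω) ∂μ) * μ (Y ⁻¹' s) := by
  rw [← lintegral_indicator_one (hY hs)]
  exact lintegral_mul_eq_lintegral_mul_lintegral_of_indepFun'' (hf.comp hX).aemeasurable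
    ((measurable_one.indicator hs).comp hY).aemeasurable (hXY.comp hf (measurable_one.indicator hs))

lemma IndepFun.lintegral_eq_top_of_comp_le {X : Ω → α} {Y : Ω → β} (hXY : IndepFun X Y μ)
    (hX : Measurable X) (hY : Measurable Y) {f : α → ℝ≥0∞} (hf : Measurable f)
    (hfX : ∫⁻ ω, f (X ω) ∂μ = ⊤) {s : Set β} (hs : MeasurableSet s) (hYs : μ (Y ⁻¹' s) ≠ 0)
    {g : Ω → ℝ≥0∞} (hfg : ∀ ω, Y ω ∈ s → f (X ω) ≤ g ω) :
    ∫⁻ ω, g ω ∂μ = ⊤ := by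
  refine top_le_iff.1 ?_
  calc ⊤ = (∫⁻ ω, f (X ω) ∂μ) * μ (Y ⁻¹' s) := by rw [hfX, ENNReal.top_mul hYs]
    _ = ∫⁻ ω, f (X ω) * (Y ⁻¹' s).indicator 1 ω ∂μ :=
      (hXY.lintegral_comp_mul_indicator_preimage hX hY hf hs).symm
    _ ≤ ∫⁻ ω, g ω ∂μ := lintegral_mono fun ω => by
      by_cases h : ω ∈ Y ⁻¹' s
      · simpa [Set.indicator_of_mem h] using hfg ω h
      · simp [Set.indicator_of_notMem h]

lemma iIndepFun.indepFun_prodMk_finset {w : ι → Ω → β} (hw : iIndepFun w μ)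
    (hmeas : ∀ i, Measurable (w i)) {i j : ι} {T : Finset ι} (hi : i ∉ T) (hj : j ∉ T) :
    IndepFun (fun ω => (w i ω, w j ω)) (fun ω (t : T) => w t ω) μ := by
  classical
  have hST : Disjoint {i, j} T := by simp [hi, hj]
  exact (hw.indepFun_finset {i, j} T hST hmeas).comp
    ((measurable_pi_apply ⟨i, by simp⟩).prodMk (measurable_pi_apply ⟨j, by simp⟩)) measurable_id

lemma iIndepFun.measure_preimage_univ_pi {w : ι → Ω → β} (hw : iIndepFun w μ) (T : Finset ι)
    {B : ι → Set β} (hB : ∀ i, MeasurableSet (B i)) :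
    μ ((fun ω (i : T) => w i ω) ⁻¹' Set.univ.pi fun i => B i) = ∏ i ∈ T, μ (w i ⁻¹' B i) := by
  have : (fun ω (i : T) => w i ω) ⁻¹' Set.univ.pi (fun i => B i) = ⋂ i ∈ T, w i ⁻¹' B i := by
    ext
    simp
  rw [this, hw.meas_biInter fun i _ => ⟨B i, hB i, rfl⟩]

end ProbabilityTheory

lemma mul_mul_le_sum_prod_affine {x₀ : ℝ} (hx₀ : 0 ≤ x₀) {a v : ℕ → ℝ} (ha0 : ∀ i, 0 ≤ a i)
    (ha1 : ∀ i, a i ≤ 1) {k : ℕ} (hk : 2 ≤ k) (hv : ∀ i ∈ Icc 1 k, 0 ≤ v i) :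
    x₀ * a 0 * a 1 * (v 1 * v 2) ≤
      ∑ j ∈ range (k + 1), x₀ * ∏ i ∈ range j, (1 - a i + a i * v (i + 1)) := by
  have hv' : ∀ i < k, 0 ≤ a i * v (i + 1) := fun i hi =>
    mul_nonneg (ha0 i) (hv _ (mem_Icc.2 ⟨by omega, by omega⟩))
  have hfactor : ∀ i, a i * v (i + 1) ≤ 1 - a i + a i * v (i + 1) := fun i => by
    linarith [ha1 i]
  have hterm : ∀ j ∈ range (k + 1), 0 ≤ x₀ * ∏ i ∈ range j, (1 - a i + a i * v (i + 1)) :=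
    fun j hj => mul_nonneg hx₀ <| prod_nonneg fun i hi =>
      (hv' i (by simp at hi hj; omega)).trans (hfactor i)
  refine le_trans ?_ (single_le_sum hterm (mem_range.2 (by omega : 2 < k + 1)))
  simp only [prod_range_succ, prod_range_zero, one_mul]
  have p0 := hv' 0 (by omega)
  calc x₀ * a 0 * a 1 * (v 1 * v 2) = x₀ * ((a 0 * v (0 + 1)) * (a 1 * v (1 + 1))) := by ring
    _ ≤ _ := mul_le_mul_of_nonneg_left
      (mul_le_mul (hfactor 0) (hfactor 1) (hv' 1 (by omega)) (p0.trans (hfactor 0))) hx₀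

/-- For the multiplicative-noise recursion `x_{k+1} = (1 - αₖ + αₖ w_{k+1}) xₖ` driven by
i.i.d. standard normals, the Polyak–Ruppert average `y_k` has infinite MGF at every
`t > (k+1)/(x₀α₀α₁)`, for every `k > 2`. -/
theorem averaged_multiplicative_noise_heavy_tail {Ω : Type*} {m0 : MeasurableSpace Ω}
    {μ : Measure Ω} [IsProbabilityMeasure μ]
    (w : ℕ → Ω → ℝ)
    (hw_meas : ∀ i, Measurable (w i))
    (hw_indep : iIndepFun (m := fun _ : ℕ => (inferInstance : MeasurableSpace ℝ)) w μ)
    (hw_gauss : ∀ i, Measure.map (w i) μ = gaussianReal 0 1)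
    (x₀ : ℝ) (hx₀ : 0 < x₀)
    (a : ℕ → ℝ) (ha0 : ∀ i, 0 < a i) (ha1 : ∀ i, a i ≤ 1 / 2)
    (x : ℕ → Ω → ℝ)
    (hx : ∀ k ω, x k ω = x₀ * ∏ i ∈ Finset.range k, (1 - a i + a i * w (i + 1) ω))
    (y : ℕ → Ω → ℝ)
    (hy : ∀ k ω, y k ω = (1 / ((k : ℝ) + 1)) * ∑ j ∈ Finset.range (k + 1), x j ω) :
    ∀ k : ℕ, 2 < k → ∀ t : ℝ, ((k : ℝ) + 1) / (x₀ * a 0 * a 1) < t →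
      ∫⁻ ω, ENNReal.ofReal (Real.exp (t * y k ω)) ∂μ = ⊤ := by
  intro k hk t ht
  have hP : 0 < x₀ * a 0 * a 1 := mul_pos (mul_pos hx₀ (ha0 0)) (ha0 1)
  set c := t * (x₀ * a 0 * a 1) / ((k : ℝ) + 1) with hc_def
  have hc : 1 < c * (1 : ℝ≥0) := by
    rw [NNReal.coe_one, mul_one, hc_def, lt_div_iff₀ (by positivity), one_mul]
    exact (div_lt_iff₀ hP).1 ht
  set Q : Set (ℝ × ℝ) := Set.Ici 0 ×ˢ Set.Ici 0
  have hQ : MeasurableSet Q := measurableSet_Ici.prod measurableSet_Ici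
  have hF : Measurable (Q.indicator fun p => ENNReal.ofReal (exp (c * (p.1 * p.2)))) :=
    Measurable.indicator (by fun_prop) hQ
  refine (hw_indep.indepFun_prodMk_finset hw_meas (i := 1) (j := 2) (T := Icc 3 k) (by simp)
    (by simp)).lintegral_eq_top_of_comp_le ((hw_meas 1).prodMk (hw_meas 2))
    (measurable_pi_lambda _ fun i => hw_meas i) hF ?_ (s := Set.univ.pi fun _ => Set.Ici 0)
    (MeasurableSet.univ_pi fun _ => measurableSet_Ici) ?_ ?_
  · rw [(hw_indep.indepFun (by norm_num : (1 : ℕ) ≠ 2)).lintegral_comp_prodMk (hw_meas 1)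
      (hw_meas 2) hF, hw_gauss 1, hw_gauss 2, lintegral_indicator hQ]
    exact lintegral_exp_mul_mul_prod_gaussianReal_eq_top hc
  · rw [hw_indep.measure_preimage_univ_pi _ fun _ => measurableSet_Ici, prod_ne_zero_iff]
    intro i _
    rw [← Measure.map_apply (hw_meas i) measurableSet_Ici, hw_gauss i]
    exact gaussianReal_ne_zero_of_volume_ne_zero 0 one_ne_zero (by simp)
  intro ω hωN
  by_cases hωQ : (w 1 ω, w 2 ω) ∈ Q
  swap
  · simp [Set.indicator_of_notMem hωQ]
  have hv : ∀ i ∈ Icc 1 k, 0 ≤ w i ω := fun i hi => by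
    rcases (show i = 1 ∨ i = 2 ∨ i ∈ Icc 3 k by simp at hi ⊢; omega) with rfl | rfl | hi3
    exacts [hωQ.1, hωQ.2, Set.mem_univ_pi.1 hωN ⟨i, hi3⟩]
  have htpos : 0 < t := (div_pos (by positivity) hP).trans ht
  rw [Set.indicator_of_mem hωQ]
  refine ENNReal.ofReal_le_ofReal (exp_le_exp.2 ?_)
  calc c * (w 1 ω * w 2 ω) = t / (k + 1) * (x₀ * a 0 * a 1 * (w 1 ω * w 2 ω)) := by ring
    _ ≤ t / (k + 1) * ∑ j ∈ range (k + 1), x j ω := by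
      simp only [hx]
      gcongr
      exact mul_mul_le_sum_prod_affine (v := fun i => w i ω) hx₀.le (fun i => (ha0 i).le)
        (fun i => (ha1 i).trans (by norm_num)) hk.le hv
    _ = t * y k ω := by
      rw [hy]
      ring
end

section
/- Let d be even, and let z₁, z₂, … be i.i.d. 2-dimensional Gaussian vectors zᵢ ~ N(0, (σ̄²/d)I₂). Define d-dimensional vectors wᵢ by w_{i,j} = z_{i,1} for j odd and w_{i,j} = z_{i,2} for j even, and let y_k = (1/(k+1))∑_{i=1}^{k} wᵢ (taking x₀ = 0). Then for every k ≥ 1 and every δ ∈ (0,1): P( σ̄√(k·log(1/δ))/(k+1) ≥ ‖y_k‖₂ ) ≤ 1 − δ. Equivalently, P(‖y_k‖₂ > σ̄√(k log(1/δ))/(k+1)) ≥ δ. -/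
/-!
Coordinatewise, `∑ᵢ wᵢ` repeats `S₀ = ∑ᵢ z_{i,0}` on the odd and `S₁ = ∑ᵢ z_{i,1}` on the even
coordinates, so `‖∑ᵢ wᵢ‖² = (d/2)(S₀² + S₁²)`. The sums `S₀, S₁` are independent `N(0, v)` with
`v = kσ²/d`, and in polar coordinates `P(S₀² + S₁² ≤ r) = 1 - exp(-r/(2v))`. The threshold of the
theorem corresponds to `r = 2v log(1/δ)`, where this probability is exactly `1 - δ`.
-/

open MeasureTheory ProbabilityTheory Finset Real
open scoped NNReal ENNReal

namespace ProbabilityTheory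

variable {ι Ω : Type*} {mΩ : MeasurableSpace Ω} {μ : Measure Ω}

lemma iIndepFun.map_finsetSum_eq_gaussianReal {X : ι → Ω → ℝ} (hX : iIndepFun X μ)
    {m : ι → ℝ} {v : ι → ℝ≥0} (hXv : ∀ i, μ.map (X i) = gaussianReal (m i) (v i))
    (s : Finset ι) :
    μ.map (∑ i ∈ s, X i) = gaussianReal (∑ i ∈ s, m i) (∑ i ∈ s, v i) := by
  classical
  have := hX.isProbabilityMeasure
  induction s using Finset.induction_on with
  | empty => simp [gaussianReal_zero_var, Pi.zero_def, Measure.map_const]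
  | insert a s ha ih =>
    have hindep : IndepFun (X a) (∑ i ∈ s, X i) μ :=
      (hX.indepFun_finsetSum_of_notMem₀
        (fun i ↦ .of_map_ne_zero (by simp [hXv i, NeZero.ne])) ha).symm
    rw [sum_insert ha, sum_insert ha, sum_insert ha,
      gaussianReal_add_gaussianReal_of_indepFun hindep (hXv a) ih]

lemma iIndepFun.indepFun_finsetSum_finsetSum₀ {β : Type*} [AddCommMonoid β]
    [MeasurableSpace β] [MeasurableAdd₂ β] {X : ι → Ω → β} (hX : iIndepFun X μ)
    (hXm : ∀ i, AEMeasurable (X i) μ) {s t : Finset ι} (hst : Disjoint s t) :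
    IndepFun (∑ i ∈ s, X i) (∑ i ∈ t, X i) μ := by
  have key := (hX.indepFun_finset₀ s t hst hXm).comp
    (measurable_sum univ fun i _ ↦ measurable_pi_apply i)
    (measurable_sum univ fun i _ ↦ measurable_pi_apply i)
  convert key using 1 <;> ext ω <;>
    simp [sum_attach s fun i ↦ X i ω, sum_attach t fun i ↦ X i ω]

lemma iIndepFun.indepFun_finsetSum_prodMk_left₀ {κ β : Type*} [AddCommMonoid β]
    [MeasurableSpace β] [MeasurableAdd₂ β] {X : ι × κ → Ω → β} (hX : iIndepFun X μ)
    (hXm : ∀ p, AEMeasurable (X p) μ) (s : Finset ι) {j j' : κ} (hjj' : j ≠ j') :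
    IndepFun (∑ i ∈ s, X (i, j)) (∑ i ∈ s, X (i, j')) μ := by
  have hdisj : Disjoint (s ×ˢ {j}) (s ×ˢ {j'}) :=
    disjoint_product.mpr (Or.inr (disjoint_singleton.mpr hjj'))
  simpa [sum_product] using hX.indepFun_finsetSum_finsetSum₀ hXm hdisj

end ProbabilityTheory

section PolarCoordinates

open Set

lemma setIntegral_comp_sq_add_sq_eq_two_pi_mul_integral (g : ℝ → ℝ) {R : ℝ} (hR : 0 ≤ R) :
    ∫ p in {p : ℝ × ℝ | p.1 ^ 2 + p.2 ^ 2 ≤ R ^ 2}, g (p.1 ^ 2 + p.2 ^ 2) =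
      2 * π * ∫ r in 0..R, r * g (r ^ 2) := by
  have hD : MeasurableSet {p : ℝ × ℝ | p.1 ^ 2 + p.2 ^ 2 ≤ R ^ 2} :=
    measurableSet_le (by fun_prop) measurable_const
  have hpolar : ∀ p ∈ polarCoord.target,
      p.1 • {p : ℝ × ℝ | p.1 ^ 2 + p.2 ^ 2 ≤ R ^ 2}.indicator
          (fun p ↦ g (p.1 ^ 2 + p.2 ^ 2)) (polarCoord.symm p) =
        (Iic R).indicator (fun r ↦ r * g (r ^ 2)) p.1 * (fun _ ↦ (1 : ℝ)) p.2 := by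
    rintro ⟨r, θ⟩ ⟨hr : 0 < r, -⟩
    have hsq : (r * cos θ) ^ 2 + (r * sin θ) ^ 2 = r ^ 2 := by
      linear_combination r ^ 2 * sin_sq_add_cos_sq θ
    simp only [polarCoord_symm_apply, indicator_apply, mem_ofPred_eq, Set.mem_Iic, hsq,
      sq_le_sq₀ hr.le hR, smul_eq_mul, mul_one, mul_ite, mul_zero]
  rw [← integral_indicator hD, ← integral_comp_polarCoord_symm,
    setIntegral_congr_fun polarCoord.open_target.measurableSet hpolar, polarCoord_target,
    Measure.volume_eq_prod, setIntegral_prod_mul ((Iic R).indicator fun r ↦ r * g (r ^ 2))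
      (fun _ ↦ (1 : ℝ)) (Ioi 0) (Ioo (-π) π),
    setIntegral_indicator measurableSet_Iic, Ioi_inter_Iic, intervalIntegral.integral_of_le hR]
  simp only [integral_const, MeasurableSet.univ, measureReal_restrict_apply, Set.univ_inter,
    volume_real_Ioo_of_le (by linarith [pi_pos] : -π ≤ π), smul_eq_mul, mul_one]
  ring

lemma integral_mul_exp_neg_sq_div {v : ℝ} (hv : v ≠ 0) (R : ℝ) :
    ∫ r in 0..R, r * exp (-r ^ 2 / (2 * v)) = v * (1 - exp (-R ^ 2 / (2 * v))) := by
  have hderiv : ∀ x ∈ uIcc 0 R,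
      HasDerivAt (fun r ↦ -v * exp (-r ^ 2 / (2 * v))) (x * exp (-x ^ 2 / (2 * v))) x := by
    intro x _
    have hquad : HasDerivAt (fun r ↦ -r ^ 2 / (2 * v)) (-(2 * x ^ 1) / (2 * v)) x :=
      (hasDerivAt_pow 2 x).neg.div_const _
    refine (hquad.exp.const_mul (-v)).congr_deriv ?_
    field_simp
  rw [intervalIntegral.integral_eq_sub_of_hasDerivAt hderiv
    (Continuous.intervalIntegrable (by fun_prop) 0 R)]
  simp only [zero_pow two_ne_zero, neg_zero, zero_div, exp_zero]
  ring

end PolarCoordinates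

namespace ProbabilityTheory

lemma gaussianPDFReal_zero_mul_gaussianPDFReal_zero (v : ℝ≥0) (x y : ℝ) :
    gaussianPDFReal 0 v x * gaussianPDFReal 0 v y =
      (2 * π * v)⁻¹ * exp (-(x ^ 2 + y ^ 2) / (2 * v)) := by
  have hsqrt : (√(2 * π * v))⁻¹ * (√(2 * π * v))⁻¹ = (2 * π * v)⁻¹ := by
    rw [← mul_inv, mul_self_sqrt (by positivity)]
  simp only [gaussianPDFReal, sub_zero]
  rw [← hsqrt, neg_add, add_div, exp_add]
  ring

lemma gaussianReal_prod_gaussianReal_sq_add_sq_le {v : ℝ≥0} (hv : v ≠ 0) {r : ℝ}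
    (hr : 0 ≤ r) :
    (gaussianReal 0 v).prod (gaussianReal 0 v) {p | p.1 ^ 2 + p.2 ^ 2 ≤ r} =
      ENNReal.ofReal (1 - exp (-r / (2 * v))) := by
  obtain ⟨R, hR, rfl⟩ : ∃ R, 0 ≤ R ∧ R ^ 2 = r := ⟨√r, sqrt_nonneg r, sq_sqrt hr⟩
  have hD : MeasurableSet {p : ℝ × ℝ | p.1 ^ 2 + p.2 ^ 2 ≤ R ^ 2} :=
    measurableSet_le (by fun_prop) measurable_const
  have hint : Integrable (fun p : ℝ × ℝ ↦ gaussianPDFReal 0 v p.1 * gaussianPDFReal 0 v p.2) :=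
    (integrable_gaussianPDFReal 0 v).mul_prod (integrable_gaussianPDFReal 0 v)
  rw [gaussianReal_of_var_ne_zero _ hv, prod_withDensity (measurable_gaussianPDF 0 v)
    (measurable_gaussianPDF 0 v), ← Measure.volume_eq_prod, withDensity_apply _ hD]
  simp_rw [gaussianPDF, ← ENNReal.ofReal_mul (gaussianPDFReal_nonneg _ _ _)]
  rw [← ofReal_integral_eq_lintegral_ofReal hint.integrableOn
    (ae_of_all _ fun p ↦ mul_nonneg (gaussianPDFReal_nonneg _ _ _) (gaussianPDFReal_nonneg _ _ _))]
  simp_rw [gaussianPDFReal_zero_mul_gaussianPDFReal_zero]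
  rw [setIntegral_comp_sq_add_sq_eq_two_pi_mul_integral
    (fun s ↦ (2 * π * v)⁻¹ * exp (-s / (2 * v))) hR]
  simp_rw [mul_left_comm _ ((2 * π * v)⁻¹), intervalIntegral.integral_const_mul,
    integral_mul_exp_neg_sq_div (NNReal.coe_ne_zero.mpr hv)]
  congr 1
  field_simp

lemma IndepFun.measure_sq_add_sq_le_of_gaussianReal {Ω : Type*} {mΩ : MeasurableSpace Ω}
    {μ : Measure Ω} {X Y : Ω → ℝ} (hXY : IndepFun X Y μ) {v : ℝ≥0} (hv : v ≠ 0)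
    (hX : μ.map X = gaussianReal 0 v) (hY : μ.map Y = gaussianReal 0 v) {r : ℝ} (hr : 0 ≤ r) :
    μ {ω | X ω ^ 2 + Y ω ^ 2 ≤ r} = ENNReal.ofReal (1 - exp (-r / (2 * v))) := by
  have hXm : AEMeasurable X μ := .of_map_ne_zero (by simp [hX, NeZero.ne])
  have hYm : AEMeasurable Y μ := .of_map_ne_zero (by simp [hY, NeZero.ne])
  have hmap : μ.map (fun ω ↦ (X ω, Y ω)) = (gaussianReal 0 v).prod (gaussianReal 0 v) := by
    rw [(indepFun_iff_map_prod_eq_prod_map_map' hXm hYm (by rw [hX]; infer_instance)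
      (by rw [hY]; infer_instance)).mp hXY, hX, hY]
  have hD : MeasurableSet {p : ℝ × ℝ | p.1 ^ 2 + p.2 ^ 2 ≤ r} :=
    measurableSet_le (by fun_prop) measurable_const
  rw [← gaussianReal_prod_gaussianReal_sq_add_sq_le hv hr, ← hmap,
    Measure.map_apply₀ (hXm.prodMk hYm) hD.nullMeasurableSet]
  rfl

end ProbabilityTheory

lemma Finset.sum_range_add_self_ite_mod_two {M : Type*} [AddCommMonoid M] (m : ℕ) (a b : M) :
    ∑ i ∈ range (m + m), (if i % 2 = 1 then a else b) = m • (a + b) := by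
  induction m with
  | zero => simp
  | succ m ih =>
    have hodd : (m + m + 1) % 2 = 1 := by omega
    have heven : ¬ (m + m) % 2 = 1 := by omega
    rw [show m + 1 + (m + 1) = m + m + 1 + 1 by ring, sum_range_succ, sum_range_succ, ih,
      if_pos hodd, if_neg heven, succ_nsmul, add_assoc, add_comm b a]

lemma EuclideanSpace.norm_sq_eq_of_apply_eq_ite_mod_two {d : ℕ} (hd : Even d)
    {x : EuclideanSpace ℝ (Fin d)} {a b : ℝ}
    (hx : ∀ j : Fin d, x j = if (j : ℕ) % 2 = 1 then a else b) :
    ‖x‖ ^ 2 = d / 2 * (a ^ 2 + b ^ 2) := by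
  obtain ⟨m, rfl⟩ := hd
  simp_rw [EuclideanSpace.norm_sq_eq, hx, Real.norm_eq_abs, sq_abs, apply_ite (· ^ 2)]
  rw [Fin.sum_univ_eq_sum_range (fun i ↦ if i % 2 = 1 then a ^ 2 else b ^ 2),
    sum_range_add_self_ite_mod_two, nsmul_eq_mul]
  push_cast
  ring

lemma EuclideanSpace.norm_le_iff_of_apply_eq_ite_mod_two {d : ℕ} (hd : 0 < d) (hd_even : Even d)
    {x : EuclideanSpace ℝ (Fin d)} {a b : ℝ}
    (hx : ∀ j : Fin d, x j = if (j : ℕ) % 2 = 1 then a else b) {c : ℝ} (hc : 0 ≤ c) :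
    ‖x‖ ≤ c ↔ a ^ 2 + b ^ 2 ≤ 2 * c ^ 2 / d := by
  rw [← pow_le_pow_iff_left₀ (norm_nonneg x) hc two_ne_zero,
    norm_sq_eq_of_apply_eq_ite_mod_two hd_even hx, le_div_iff₀' (by positivity)]
  constructor <;> intro h <;> linarith

theorem averaged_gaussian_lower_bound_general {Ω : Type*} {m0 : MeasurableSpace Ω}
    {μ : Measure Ω}
    {d : ℕ} (hd : 0 < d) (hd_even : Even d)
    (σ : ℝ) (hσ : 0 < σ)
    (z : ℕ → Fin 2 → Ω → ℝ)
    (hz_indep : iIndepFun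
      (fun p : ℕ × Fin 2 => z p.1 p.2) μ)
    (hz_gauss : ∀ i j, Measure.map (z i j) μ = gaussianReal 0 ((σ ^ 2 / d).toNNReal))
    (w : ℕ → Ω → EuclideanSpace ℝ (Fin d))
    (hw : ∀ i ω (j : Fin d), w i ω j = if (j : ℕ) % 2 = 1 then z i 0 ω else z i 1 ω)
    (y : ℕ → Ω → EuclideanSpace ℝ (Fin d))
    (hy : ∀ k ω, y k ω = ((k : ℝ) + 1)⁻¹ • ∑ i ∈ Finset.Icc 1 k, w i ω) :
    ∀ k : ℕ, 1 ≤ k → ∀ δ : ℝ, 0 < δ → δ < 1 →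
      μ {ω | ‖y k ω‖ ≤ σ * Real.sqrt ((k : ℝ) * Real.log (1 / δ)) / ((k : ℝ) + 1)} ≤
        ENNReal.ofReal (1 - δ) := by
  intro k hk δ hδ0 hδ1
  set v : ℝ≥0 := (σ ^ 2 / d).toNNReal
  have hkv : ((k • v : ℝ≥0) : ℝ) = k * (σ ^ 2 / d) := by
    rw [NNReal.coe_nsmul, Real.coe_toNNReal _ (by positivity), nsmul_eq_mul]
  have hkv_ne : k • v ≠ 0 := by
    rw [← NNReal.coe_ne_zero, hkv]
    exact (mul_pos (by exact_mod_cast hk) (by positivity)).ne'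
  have hL : 0 ≤ log (1 / δ) := log_nonneg (one_le_one_div hδ0 hδ1.le)
  set S : Fin 2 → Ω → ℝ := fun j ↦ ∑ i ∈ Icc 1 k, z i j
  have hS_law (j : Fin 2) : μ.map (S j) = gaussianReal 0 (k • v) := by
    simpa using (hz_indep.precomp (Prod.mk_left_injective j)).map_finsetSum_eq_gaussianReal
      (fun i ↦ hz_gauss i j) (Icc 1 k)
  have hS_indep : IndepFun (S 0) (S 1) μ := hz_indep.indepFun_finsetSum_prodMk_left₀
    (fun p ↦ .of_map_ne_zero (by simp [hz_gauss, NeZero.ne])) (Icc 1 k) zero_ne_one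
  have hS_coord (ω : Ω) (j : Fin d) :
      (∑ i ∈ Icc 1 k, w i ω) j = if (j : ℕ) % 2 = 1 then S 0 ω else S 1 ω := by
    split_ifs with hj <;> simp [S, hw, hj]
  have hevent : {ω | ‖y k ω‖ ≤ σ * √(k * log (1 / δ)) / (k + 1)} =
      {ω | S 0 ω ^ 2 + S 1 ω ^ 2 ≤ 2 * (k • v : ℝ≥0) * log (1 / δ)} := by
    ext ω
    have hk1 : (0 : ℝ) < k + 1 := by positivity
    rw [Set.mem_ofPred_eq, Set.mem_ofPred_eq, hy, norm_smul, norm_inv, norm_of_nonneg hk1.le,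
      inv_mul_eq_div, div_le_div_iff_of_pos_right hk1,
      EuclideanSpace.norm_le_iff_of_apply_eq_ite_mod_two hd hd_even (hS_coord ω) (by positivity),
      mul_pow, sq_sqrt (by positivity), hkv]
    field_simp
  have hexponent : -(2 * (k • v : ℝ≥0) * log (1 / δ)) / (2 * (k • v : ℝ≥0)) = log δ := by
    rw [one_div, log_inv]
    field_simp
  rw [hevent, hS_indep.measure_sq_add_sq_le_of_gaussianReal hkv_ne (hS_law 0) (hS_law 1)
    (by positivity), hexponent, exp_log hδ0]

/-- Tightness example: with `d` even, `wᵢ` built from i.i.d. 2-dimensional Gaussians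
`zᵢ ~ N(0, (σ̄²/d) I₂)` by repeating the two coordinates over odd/even indices, the
average `y_k = (1/(k+1)) ∑_{i=1}^k wᵢ` satisfies
`P(‖y_k‖₂ ≤ σ̄√(k log(1/δ))/(k+1)) ≤ 1 - δ`. -/
theorem averaged_gaussian_lower_bound {Ω : Type*} {m0 : MeasurableSpace Ω}
    {μ : Measure Ω} [IsProbabilityMeasure μ]
    {d : ℕ} (hd : 0 < d) (hd_even : Even d)
    (σ : ℝ) (hσ : 0 < σ)
    (z : ℕ → Fin 2 → Ω → ℝ)
    (hz_meas : ∀ i j, Measurable (z i j))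
    (hz_indep : iIndepFun
      (fun p : ℕ × Fin 2 => z p.1 p.2) μ)
    (hz_gauss : ∀ i j, Measure.map (z i j) μ = gaussianReal 0 ((σ ^ 2 / d).toNNReal))
    (w : ℕ → Ω → EuclideanSpace ℝ (Fin d))
    (hw : ∀ i ω (j : Fin d), w i ω j = if (j : ℕ) % 2 = 1 then z i 0 ω else z i 1 ω)
    (y : ℕ → Ω → EuclideanSpace ℝ (Fin d))
    (hy : ∀ k ω, y k ω = ((k : ℝ) + 1)⁻¹ • ∑ i ∈ Finset.Icc 1 k, w i ω) :
    ∀ k : ℕ, 1 ≤ k → ∀ δ : ℝ, 0 < δ → δ < 1 →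
      μ {ω | ‖y k ω‖ ≤ σ * Real.sqrt ((k : ℝ) * Real.log (1 / δ)) / ((k : ℝ) + 1)} ≤
        ENNReal.ofReal (1 - δ) :=
  averaged_gaussian_lower_bound_general (m0 := m0) hd hd_even σ hσ z hz_indep hz_gauss w hw y hy
end
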